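/- Let S : W → W be any ℝ-linear map satisfying S x − x ∈ W̃ for every x ∈ W, S x = 0 for every x ∈ W̃, and T(S x) = 0 for every x ∈ W. Then: (a) for every x ∈ W, the element S x is the unique y ∈ W with y − x ∈ W̃ and T y = 0; and (b) S maps W̄ into W̄, and the quotient projection π : W̄ → W̄ ⧸ W̃ restricts to a linear bijection from {y ∈ W̄ : T y = 0} onto W̄ ⧸ W̃, with inverse induced by S. (Abstract form of parts (1) and (2) of Theorem 3.3 of the paper, characterizing the splitting operator.) -/

import Mathlib

/-!
On the kernel of `T`, `aeval T p` acts as the scalar `p.eval 0`, which is nonzero for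
`p = ∏ r, (X - C (a ℓ r))` since all the `a ℓ r` are nonzero. Hence an element of `F ℓ ∩ ker T`
lies in `F (ℓ + 1)`, and climbing the filtration from `F 0 = W̃` to `F N = 0` shows that `T` is
injective on `W̃`. This gives uniqueness in (a) and injectivity in (b); existence and
surjectivity are provided by `S`.
-/

open Polynomial

section Filtration

variable {K M : Type*} [Field K] [AddCommGroup M] [Module K M]

theorem eval_zero_prod_X_sub_C_ne_zero {ι : Type*} [Fintype ι] {a : ι → K} (ha : ∀ r, a r ≠ 0) :
    (∏ r, (X - C (a r))).eval 0 ≠ 0 := by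
  simpa [eval_prod, Finset.prod_eq_zero_iff] using ha

theorem mem_succ_of_apply_eq_zero {T : Module.End K M} {p : K[X]} (hp : p.eval 0 ≠ 0)
    {P Q : Submodule K M} (hPQ : ∀ x ∈ P, aeval T p x ∈ Q) {x : M} (hx : x ∈ P) (hTx : T x = 0) :
    x ∈ Q := by
  have hpx : aeval T p x = p.eval 0 • x :=
    Module.End.aeval_apply_of_mem_apply_eq_smul (by rw [hTx, zero_smul])
  simpa [hpx, Submodule.smul_mem_iff _ hp] using hPQ x hx

theorem eq_zero_of_mem_of_apply_eq_zero {T : Module.End K M} {N : ℕ} {F : ℕ → Submodule K M}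
    (hFN : F N = ⊥) {p : ℕ → K[X]} (hp0 : ∀ ℓ < N, (p ℓ).eval 0 ≠ 0)
    (hp : ∀ ℓ < N, ∀ x ∈ F ℓ, aeval T (p ℓ) x ∈ F (ℓ + 1))
    {x : M} (hx : x ∈ F 0) (hTx : T x = 0) : x = 0 := by
  have hmem : ∀ ℓ ≤ N, x ∈ F ℓ := by
    intro ℓ hℓ
    induction ℓ with
    | zero => exact hx
    | succ ℓ ih => exact mem_succ_of_apply_eq_zero (hp0 ℓ hℓ) (hp ℓ hℓ) (ih (by omega)) hTx
  simpa [hFN] using hmem N le_rfl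

end Filtration

section Splitting

variable {R M : Type*} [Ring R] [AddCommGroup M] [Module R M]
  {P : Submodule R M} {T : Module.End R M}

theorem eq_of_sub_mem_of_apply_eq_zero (hker : ∀ x ∈ P, T x = 0 → x = 0) {y z : M}
    (hyz : y - z ∈ P) (hy : T y = 0) (hz : T z = 0) : y = z :=
  sub_eq_zero.mp (hker _ hyz (by rw [map_sub, hy, hz, sub_zero]))

theorem Submodule.mkQ_comap_subtype_eq_iff {Q : Submodule R M} (y z : Q) :
    (P.comap Q.subtype).mkQ y = (P.comap Q.subtype).mkQ z ↔ (y : M) - z ∈ P := by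
  simp [Submodule.Quotient.eq]

end Splitting

theorem splitting_operator_characterization_general {W : Type*} [AddCommGroup W] [Module ℝ W]
    (Wtil Wbar : Submodule ℝ W) (hWW : Wtil ≤ Wbar)
    (T : Module.End ℝ W)
    (N : ℕ) (F : ℕ → Submodule ℝ W)
    (hF0 : F 0 = Wtil) (hFN : F N = ⊥)
    (j : ℕ → ℕ) (a : (ℓ : ℕ) → Fin (j ℓ) → ℝ)
    (ha0 : ∀ ℓ < N, ∀ r, a ℓ r ≠ 0)
    (hdiag : ∀ ℓ < N, ∀ x ∈ F ℓ,
      (aeval T (∏ r : Fin (j ℓ), (X - C (a ℓ r)))) x ∈ F (ℓ + 1))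
    (S : Module.End ℝ W)
    (hS1 : ∀ x : W, S x - x ∈ Wtil)
    (hS3 : ∀ x : W, T (S x) = 0) :
    (∀ x : W, (S x - x ∈ Wtil ∧ T (S x) = 0) ∧
      ∀ y : W, y - x ∈ Wtil → T y = 0 → y = S x) ∧
    (∀ x ∈ Wbar, S x ∈ Wbar) ∧
    Function.Bijective (fun y : {y : Wbar // T (y : W) = 0} =>
      (Wtil.comap Wbar.subtype).mkQ y.1) ∧
    (∀ x : Wbar, ∃ h : S (x : W) ∈ Wbar,
      T (S (x : W)) = 0 ∧
      (Wtil.comap Wbar.subtype).mkQ ⟨S (x : W), h⟩ = (Wtil.comap Wbar.subtype).mkQ x) := by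
  have hker : ∀ x ∈ Wtil, T x = 0 → x = 0 := fun x hx hTx =>
    eq_zero_of_mem_of_apply_eq_zero hFN (fun ℓ hℓ => eval_zero_prod_X_sub_C_ne_zero (ha0 ℓ hℓ))
      hdiag (hF0 ▸ hx) hTx
  have hSbar : ∀ x ∈ Wbar, S x ∈ Wbar := fun x hx => by
    simpa using Wbar.add_mem (hWW (hS1 x)) hx
  have hSmkQ : ∀ x : Wbar, (Wtil.comap Wbar.subtype).mkQ ⟨S x, hSbar x x.2⟩ =
      (Wtil.comap Wbar.subtype).mkQ x := fun x =>
    (Submodule.mkQ_comap_subtype_eq_iff _ _).mpr (hS1 x)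
  refine ⟨fun x => ⟨⟨hS1 x, hS3 x⟩, fun y hy hTy => ?uniq⟩, hSbar, ⟨?inj, ?surj⟩,
    fun x => ⟨hSbar x x.2, hS3 x, hSmkQ x⟩⟩
  case uniq =>
    refine eq_of_sub_mem_of_apply_eq_zero hker ?_ hTy (hS3 x)
    simpa using Wtil.sub_mem hy (hS1 x)
  case inj =>
    rintro ⟨y, hy⟩ ⟨z, hz⟩ hyz
    exact Subtype.ext (Subtype.ext
      (eq_of_sub_mem_of_apply_eq_zero hker ((Submodule.mkQ_comap_subtype_eq_iff y z).mp hyz) hy hz))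
  case surj =>
    intro q
    obtain ⟨x, rfl⟩ := Submodule.mkQ_surjective _ q
    exact ⟨⟨⟨S x, hSbar x x.2⟩, hS3 x⟩, hSmkQ x⟩

/-- Abstract form of parts (1) and (2) of Theorem 3.3, characterizing the splitting operator:
(a) `S x` is the unique element `y` with `y − x ∈ W̃` and `T y = 0`; (b) `S` maps `W̄` to `W̄`
and the quotient projection `π : W̄ → W̄ ⧸ W̃` restricts to a linear bijection from
`{y ∈ W̄ : T y = 0}` onto `W̄ ⧸ W̃`, with inverse induced by `S`. -/
theorem splitting_operator_characterization {W : Type*} [AddCommGroup W] [Module ℝ W]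
    (Wtil Wbar : Submodule ℝ W) (hWW : Wtil ≤ Wbar)
    (T : Module.End ℝ W) (hrange : LinearMap.range T ≤ Wtil)
    (N : ℕ) (F : ℕ → Submodule ℝ W)
    (hF0 : F 0 = Wtil) (hFN : F N = ⊥)
    (hdec : ∀ ℓ : ℕ, F (ℓ + 1) ≤ F ℓ)
    (hTF : ∀ ℓ : ℕ, ∀ x ∈ F ℓ, T x ∈ F ℓ)
    (j : ℕ → ℕ) (a : (ℓ : ℕ) → Fin (j ℓ) → ℝ)
    (ha0 : ∀ ℓ < N, ∀ r, a ℓ r ≠ 0)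
    (hainj : ∀ ℓ < N, Function.Injective (a ℓ))
    (hdiag : ∀ ℓ < N, ∀ x ∈ F ℓ,
      (aeval T (∏ r : Fin (j ℓ), (X - C (a ℓ r)))) x ∈ F (ℓ + 1))
    (S : Module.End ℝ W)
    (hS1 : ∀ x : W, S x - x ∈ Wtil)
    (hS2 : ∀ x ∈ Wtil, S x = 0)
    (hS3 : ∀ x : W, T (S x) = 0) :
    (∀ x : W, (S x - x ∈ Wtil ∧ T (S x) = 0) ∧
      ∀ y : W, y - x ∈ Wtil → T y = 0 → y = S x) ∧
    (∀ x ∈ Wbar, S x ∈ Wbar) ∧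
    Function.Bijective (fun y : {y : Wbar // T (y : W) = 0} =>
      (Wtil.comap Wbar.subtype).mkQ y.1) ∧
    (∀ x : Wbar, ∃ h : S (x : W) ∈ Wbar,
      T (S (x : W)) = 0 ∧
      (Wtil.comap Wbar.subtype).mkQ ⟨S (x : W), h⟩ = (Wtil.comap Wbar.subtype).mkQ x) :=
  splitting_operator_characterization_general Wtil Wbar hWW T N F hF0 hFN j a ha0 hdiag S hS1 hS3
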